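/- Let G, H₁, H₂ be torsion-free finitely Butler abelian groups such that G is divisible, and let g₁ : G → H₁ and g₂ : G → H₂ be pure embeddings. Then there exist a torsion-free finitely Butler abelian group H and pure embeddings f₁ : H₁ → H and f₂ : H₂ → H such that f₁ ∘ g₁ = f₂ ∘ g₂. -/

import Mathlib

/-- `H` is a pure subgroup: `nG ∩ H = nH` for every `n : ℕ`. -/
def AddSubgroup.IsPure {G : Type*} [AddCommGroup G] (H : AddSubgroup G) : Prop :=
  ∀ (n : ℕ), ∀ h ∈ H, (∃ g : G, n • g = h) → ∃ h' ∈ H, n • h' = h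

/-- A Butler group: a torsion-free abelian group of finite rank admitting a pure embedding
into a finite direct sum of rank-one torsion-free groups (nonzero subgroups of `ℚ`). -/
def IsButler (B : Type*) [AddCommGroup B] : Prop :=
  NoZeroSMulDivisors ℤ B ∧ Module.rank ℤ B < Cardinal.aleph0 ∧
    ∃ (k : ℕ) (A : Fin k → AddSubgroup ℚ), (∀ i, A i ≠ ⊥) ∧
      ∃ f : B →+ (∀ i : Fin k, ↥(A i)), Function.Injective f ∧ f.range.IsPure

/-- A torsion-free finitely Butler (B₀-) group: a torsion-free abelian group all of whose
finite-rank pure subgroups are Butler groups. -/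
def IsFinitelyButler (B : Type*) [AddCommGroup B] : Prop :=
  NoZeroSMulDivisors ℤ B ∧
    ∀ H : AddSubgroup B, H.IsPure → Module.rank ℤ ↥H < Cardinal.aleph0 → IsButler ↥H

/-!
A divisible group is injective, so `g₂` splits: `H₂ = g₂(G) ⊕ K` with `K` the kernel of a
retraction `r` of `g₂`. The amalgam is `H₁ × K`, with `f₁` the first inclusion and
`f₂ (g₂ x + k) = (g₁ x, k)`; both ranges are products of pure subgroups, hence pure.

It remains to see that finitely Butler groups are closed under pure subgroups (`K` is pure in
`H₂`, being the kernel of a map to a torsion-free group) and under binary products. For the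
latter, a pure subgroup `P` of finite rank of `B × C` lies in `S × T`, where `S` and `T` are the
purifications of the two projections of `P`; these have finite rank, so they are Butler, hence so
is `S × T`, and `P` is pure in it.
-/

open Function

universe u

namespace AddSubgroup

variable {A B : Type*} [AddCommGroup A] [AddCommGroup B]

theorem isPure_of_nsmul_mem {H : AddSubgroup A}
    (h : ∀ n : ℕ, n ≠ 0 → ∀ g : A, n • g ∈ H → g ∈ H) : H.IsPure := by
  rintro n x hx ⟨g, rfl⟩
  rcases eq_or_ne n 0 with rfl | hn
  · exact ⟨0, H.zero_mem, by simp⟩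
  · exact ⟨g, h n hn g hx, rfl⟩

theorem IsPure.mem_of_nsmul_mem [IsAddTorsionFree A] {H : AddSubgroup A} (hH : H.IsPure)
    {n : ℕ} (hn : n ≠ 0) {g : A} (hg : n • g ∈ H) : g ∈ H := by
  obtain ⟨h, hmem, hh⟩ := hH n _ hg ⟨g, rfl⟩
  exact nsmul_right_injective hn hh ▸ hmem

theorem isPure_top : (⊤ : AddSubgroup A).IsPure :=
  isPure_of_nsmul_mem fun _ _ g _ => mem_top g

theorem isPure_bot [IsAddTorsionFree A] : (⊥ : AddSubgroup A).IsPure :=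
  isPure_of_nsmul_mem fun _ hn _ hg => (nsmul_eq_zero_iff_right hn).mp hg

theorem IsPure.prod {H : AddSubgroup A} {K : AddSubgroup B} (hH : H.IsPure) (hK : K.IsPure) :
    (H.prod K).IsPure := by
  rintro n ⟨a, b⟩ ⟨ha, hb⟩ ⟨⟨x, y⟩, hxy⟩
  obtain ⟨hx, hy⟩ := Prod.ext_iff.mp hxy
  obtain ⟨a', ha', rfl⟩ := hH n a ha ⟨x, hx⟩
  obtain ⟨b', hb', rfl⟩ := hK n b hb ⟨y, hy⟩
  exact ⟨(a', b'), ⟨ha', hb'⟩, rfl⟩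

theorem IsPure.comap [IsAddTorsionFree B] {H : AddSubgroup B} (hH : H.IsPure) (f : A →+ B) :
    (H.comap f).IsPure :=
  isPure_of_nsmul_mem fun _ hn _ hg => hH.mem_of_nsmul_mem hn (by simpa using hg)

theorem IsPure.map {H : AddSubgroup A} (hH : H.IsPure) {f : A →+ B} (hf : Injective f)
    (hrange : f.range.IsPure) : (H.map f).IsPure := by
  rintro n _ ⟨a, ha, rfl⟩ hdiv
  obtain ⟨_, ⟨b, rfl⟩, hb⟩ := hrange n (f a) ⟨a, rfl⟩ hdiv
  obtain ⟨c, hc, rfl⟩ := hH n a ha ⟨b, hf (by rwa [map_nsmul])⟩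
  exact ⟨f c, mem_map_of_mem f hc, (map_nsmul f n c).symm⟩

end AddSubgroup

open AddSubgroup

theorem AddMonoidHom.isPure_ker {A B : Type*} [AddCommGroup A] [AddCommGroup B]
    [IsAddTorsionFree B] (f : A →+ B) : f.ker.IsPure := by
  rw [← comap_bot]
  exact isPure_bot.comap f

theorem AddMonoidHom.range_inl {M N : Type*} [AddCommGroup M] [AddCommGroup N] :
    (AddMonoidHom.inl M N).range = (⊤ : AddSubgroup M).prod ⊥ := by
  ext ⟨a, b⟩
  simp [mem_prod, eq_comm]

theorem AddEquiv.isPure_range {A B : Type*} [AddCommGroup A] [AddCommGroup B] (e : A ≃+ B) :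
    (e : A →+ B).range.IsPure := by
  rw [AddMonoidHom.range_eq_top_of_surjective _ e.surjective]
  exact isPure_top

theorem AddSubgroup.rank_map_le {A B : Type u} [AddCommGroup A] [AddCommGroup B] (f : A →+ B)
    (H : AddSubgroup A) : Module.rank ℤ (H.map f) ≤ Module.rank ℤ H :=
  (f.addSubgroupMap H).toIntLinearMap.rank_le_of_surjective (f.addSubgroupMap_surjective H)

theorem rank_int_prod (B C : Type u) [AddCommGroup B] [AddCommGroup C] :
    Module.rank ℤ (B × C) = Module.rank ℤ B + Module.rank ℤ C := by
  have h := (LinearMap.snd ℤ B C).rank_range_add_rank_ker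
  rwa [LinearMap.range_eq_top_of_surjective _ Prod.snd_surjective, rank_top, LinearMap.ker_snd,
    rank_range_of_injective _ LinearMap.inl_injective, add_comm, eq_comm] at h

namespace AddSubgroup

variable {A : Type u} [AddCommGroup A]

def purification (S : AddSubgroup A) : AddSubgroup A where
  carrier := {a | ∃ n : ℕ, n ≠ 0 ∧ n • a ∈ S}
  zero_mem' := ⟨1, one_ne_zero, by simp⟩
  add_mem' := by
    rintro a b ⟨m, hm, ha⟩ ⟨n, hn, hb⟩
    refine ⟨m * n, mul_ne_zero hm hn, ?_⟩
    rw [smul_add, mul_nsmul, mul_comm, mul_nsmul]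
    exact S.add_mem (S.nsmul_mem ha n) (S.nsmul_mem hb m)
  neg_mem' := by
    rintro a ⟨n, hn, ha⟩
    exact ⟨n, hn, by simpa using S.neg_mem ha⟩

theorem le_purification (S : AddSubgroup A) : S ≤ S.purification :=
  fun a ha => ⟨1, one_ne_zero, by simpa using ha⟩

theorem isPure_purification (S : AddSubgroup A) : S.purification.IsPure :=
  isPure_of_nsmul_mem fun n hn _ ⟨m, hm, hmg⟩ =>
    ⟨m * n, mul_ne_zero hm hn, by rwa [mul_nsmul']⟩

theorem rank_purification (S : AddSubgroup A) :
    Module.rank ℤ S.purification = Module.rank ℤ S := by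
  let U : Submodule ℤ S.purification := toIntSubmodule (S.addSubgroupOf S.purification)
  have hquot : Module.rank ℤ (S.purification ⧸ U) = 0 := by
    refine rank_eq_zero_iff.mpr fun x => ?_
    obtain ⟨⟨a, n, hn, hna⟩, rfl⟩ := Submodule.Quotient.mk_surjective U x
    refine ⟨n, by exact_mod_cast hn, ?_⟩
    rw [← Submodule.Quotient.mk_smul, Submodule.Quotient.mk_eq_zero]
    change _ ∈ S.addSubgroupOf S.purification
    simpa [mem_addSubgroupOf] using hna
  have hU : Module.rank ℤ U = Module.rank ℤ S :=
    (addSubgroupOfEquivOfLe (le_purification S)).toIntLinearEquiv.rank_eq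
  rw [← U.rank_quotient_add_rank, hquot, hU, zero_add]

end AddSubgroup

section Butler

variable {B C : Type*} [AddCommGroup B] [AddCommGroup C]

theorem isButler_of_injective_pi {ι : Type*} [Finite ι] (A : ι → AddSubgroup ℚ)
    (hA : ∀ i, A i ≠ ⊥) (f : B →+ ∀ i, A i) (hf : Injective f) (hpure : f.range.IsPure)
    (hrank : Module.rank ℤ B < Cardinal.aleph0) : IsButler B := by
  have := Injective.isAddTorsionFree f hf
  obtain ⟨n, ⟨e⟩⟩ := Finite.exists_equiv_fin ι
  let e' := (LinearEquiv.piCongrLeft' ℤ (fun i => ↥(A i)) e).toAddEquiv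
  refine ⟨inferInstance, hrank, n, fun j => A (e.symm j), fun j => hA _,
    (e' : _ →+ _).comp f, e'.injective.comp hf, ?_⟩
  rw [AddMonoidHom.range_comp]
  exact hpure.map e'.injective e'.isPure_range

theorem IsButler.of_injective (hC : IsButler C) (f : B →+ C) (hf : Injective f)
    (hpure : f.range.IsPure) : IsButler B := by
  obtain ⟨-, hrank, k, A, hA, e, he, hepure⟩ := hC
  refine isButler_of_injective_pi A hA (e.comp f) (he.comp hf) ?_ ?_
  · rw [AddMonoidHom.range_comp]
    exact hpure.map he hepure
  · exact Cardinal.lift_lt_aleph0.mp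
      ((LinearMap.lift_rank_le_of_injective f.toIntLinearMap hf).trans_lt
        (Cardinal.lift_lt_aleph0.mpr hrank))

theorem IsButler.of_addEquiv (hC : IsButler C) (e : B ≃+ C) : IsButler B :=
  hC.of_injective e e.injective e.isPure_range

theorem IsButler.of_le {A : Type*} [AddCommGroup A] [IsAddTorsionFree A] {P K : AddSubgroup A}
    (hK : IsButler K) (hPK : P ≤ K) (hP : P.IsPure) : IsButler P :=
  hK.of_injective (inclusion hPK) (inclusion_injective hPK)
    (by rw [inclusion_range]; exact hP.comap K.subtype)

theorem IsButler.prod {B C : Type u} [AddCommGroup B] [AddCommGroup C] (hB : IsButler B)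
    (hC : IsButler C) : IsButler (B × C) := by
  obtain ⟨-, hrankB, k, A, hA, f, hf, hfpure⟩ := hB
  obtain ⟨-, hrankC, l, A', hA', g, hg, hgpure⟩ := hC
  let e : ((∀ i, A i) × ∀ j, A' j) ≃+ ∀ s, ↥(Sum.elim A A' s) :=
    (LinearEquiv.sumPiEquivProdPi ℤ (Fin k) (Fin l) fun s => ↥(Sum.elim A A' s)).symm.toAddEquiv
  refine isButler_of_injective_pi (Sum.elim A A') (by rintro (i | j) <;> simp [hA, hA'])
    ((e : _ →+ _).comp (f.prodMap g)) (e.injective.comp (hf.prodMap hg)) ?_ ?_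
  · rw [AddMonoidHom.range_comp, AddMonoidHom.range_prodMap]
    exact (hfpure.prod hgpure).map e.injective e.isPure_range
  · rw [rank_int_prod]
    exact Cardinal.add_lt_aleph0 hrankB hrankC

end Butler

section FinitelyButler

variable {B C : Type u} [AddCommGroup B] [AddCommGroup C]

theorem IsFinitelyButler.isAddTorsionFree (hB : IsFinitelyButler B) : IsAddTorsionFree B :=
  have := hB.1
  .of_isTorsionFree ℤ B

theorem IsFinitelyButler.of_injective (hC : IsFinitelyButler C) (f : B →+ C) (hf : Injective f)
    (hpure : f.range.IsPure) : IsFinitelyButler B := by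
  have := hC.isAddTorsionFree
  have := Injective.isAddTorsionFree f hf
  refine ⟨inferInstance, fun P hP hrank => ?_⟩
  let e := P.equivMapOfInjective f hf
  exact (hC.2 _ (hP.map hf hpure) (e.toIntLinearEquiv.rank_eq ▸ hrank)).of_addEquiv e

theorem IsFinitelyButler.prod (hB : IsFinitelyButler B) (hC : IsFinitelyButler C) :
    IsFinitelyButler (B × C) := by
  have := hB.isAddTorsionFree
  have := hC.isAddTorsionFree
  refine ⟨inferInstance, fun P hP hrank => ?_⟩
  have hS : IsButler (P.map (AddMonoidHom.fst B C)).purification :=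
    hB.2 _ (isPure_purification _) <| by
      rw [rank_purification]; exact (AddSubgroup.rank_map_le _ P).trans_lt hrank
  have hT : IsButler (P.map (AddMonoidHom.snd B C)).purification :=
    hC.2 _ (isPure_purification _) <| by
      rw [rank_purification]; exact (AddSubgroup.rank_map_le _ P).trans_lt hrank
  have hle : P ≤ (P.map (AddMonoidHom.fst B C)).purification.prod
      (P.map (AddMonoidHom.snd B C)).purification := fun x hx =>
    ⟨le_purification _ (mem_map_of_mem _ hx), le_purification _ (mem_map_of_mem _ hx)⟩
  exact ((hS.prod hT).of_addEquiv (prodEquiv _ _)).of_le hle hP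

end FinitelyButler

theorem exists_retraction_of_divisible {G H : Type*} [AddCommGroup G] [AddCommGroup H]
    [DivisibleBy G ℤ] (g : G →+ H) (hg : Injective g) :
    ∃ r : H →+ G, r.comp g = AddMonoidHom.id G :=
  (Module.Baer.of_divisible G).extension_property_addMonoidHom g hg _

theorem AddMonoidHom.sub_map_mem_ker_of_comp_eq_id {G H : Type*} [AddCommGroup G]
    [AddCommGroup H] {g : G →+ H} {r : H →+ G} (hr : r.comp g = AddMonoidHom.id G) (h : H) :
    h - g (r h) ∈ r.ker := by
  rw [mem_ker, map_sub, ← comp_apply, hr, id_apply, sub_self]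

section Amalgam

variable {G H₁ H₂ : Type*} [AddCommGroup G] [AddCommGroup H₁] [AddCommGroup H₂]
  (g₁ : G →+ H₁) {g₂ : G →+ H₂} {r : H₂ →+ G} (hr : r.comp g₂ = AddMonoidHom.id G)

def amalgamOfRetraction : H₂ →+ H₁ × r.ker :=
  (g₁.comp r).prod ((AddMonoidHom.id H₂ - g₂.comp r).codRestrict r.ker
    (AddMonoidHom.sub_map_mem_ker_of_comp_eq_id hr))

@[simp]
theorem amalgamOfRetraction_apply (h : H₂) :
    amalgamOfRetraction g₁ hr h =
      (g₁ (r h), ⟨h - g₂ (r h), AddMonoidHom.sub_map_mem_ker_of_comp_eq_id hr h⟩) :=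
  rfl

theorem amalgamOfRetraction_comp :
    (amalgamOfRetraction g₁ hr).comp g₂ = (AddMonoidHom.inl H₁ r.ker).comp g₁ := by
  have hrg (x : G) : r (g₂ x) = x := DFunLike.congr_fun hr x
  ext x <;> simp [hrg]

theorem amalgamOfRetraction_injective (hg₁ : Injective g₁) :
    Injective (amalgamOfRetraction g₁ hr) := by
  refine (injective_iff_map_eq_zero _).mpr fun h hh => ?_
  have hrh : r h = 0 := hg₁ (by simpa using congrArg Prod.fst hh)
  simpa [hrh] using congrArg (fun p => (p.2 : H₂)) hh

theorem range_amalgamOfRetraction : (amalgamOfRetraction g₁ hr).range = g₁.range.prod ⊤ := by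
  have hrg (x : G) : r (g₂ x) = x := DFunLike.congr_fun hr x
  ext ⟨a, s⟩
  constructor
  · rintro ⟨h, hh⟩
    exact ⟨⟨r h, congrArg Prod.fst hh⟩, trivial⟩
  · rintro ⟨⟨x, rfl⟩, -⟩
    have hs : r s = 0 := s.2
    refine ⟨g₂ x + s, ?_⟩
    ext <;> simp [hrg, hs]

end Amalgam

theorem divisible_isAmalgamationBase_finitelyButler_general
    {G H₁ H₂ : Type u} [AddCommGroup G] [AddCommGroup H₁] [AddCommGroup H₂]
    (hG : IsFinitelyButler G) (hH₁ : IsFinitelyButler H₁) (hH₂ : IsFinitelyButler H₂)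
    (hdiv : ∀ g : G, ∀ n : ℕ, 1 ≤ n → ∃ x : G, n • x = g)
    (g₁ : G →+ H₁) (g₂ : G →+ H₂)
    (hg₁ : Function.Injective g₁) (hg₂ : Function.Injective g₂)
    (hp₁ : g₁.range.IsPure) :
    ∃ (H : Type u) (_ : AddCommGroup H), IsFinitelyButler H ∧
      ∃ (f₁ : H₁ →+ H) (f₂ : H₂ →+ H),
        Function.Injective f₁ ∧ f₁.range.IsPure ∧
        Function.Injective f₂ ∧ f₂.range.IsPure ∧
        f₁.comp g₁ = f₂.comp g₂ := by
  have := hG.isAddTorsionFree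
  have := hH₂.isAddTorsionFree
  let : DivisibleBy G ℕ :=
    divisibleByOfSMulRightSurj G ℕ fun hn x => hdiv x _ (Nat.one_le_iff_ne_zero.mpr hn)
  let := AddGroup.divisibleByIntOfDivisibleByNat G
  obtain ⟨r, hr⟩ := exists_retraction_of_divisible g₂ hg₂
  have hK : IsFinitelyButler r.ker :=
    hH₂.of_injective r.ker.subtype Subtype.val_injective <| by
      rw [range_subtype]; exact r.isPure_ker
  refine ⟨H₁ × r.ker, inferInstance, hH₁.prod hK, AddMonoidHom.inl _ _,
    amalgamOfRetraction g₁ hr, Prod.mk_left_injective 0, ?_,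
    amalgamOfRetraction_injective g₁ hr hg₁, ?_, (amalgamOfRetraction_comp g₁ hr).symm⟩
  · rw [AddMonoidHom.range_inl]
    exact isPure_top.prod isPure_bot
  · rw [range_amalgamOfRetraction]
    exact hp₁.prod isPure_top

/-- Divisible torsion-free finitely Butler groups are amalgamation bases in the class of
torsion-free finitely Butler groups with pure embeddings. -/
theorem divisible_isAmalgamationBase_finitelyButler
    {G H₁ H₂ : Type u} [AddCommGroup G] [AddCommGroup H₁] [AddCommGroup H₂]
    (hG : IsFinitelyButler G) (hH₁ : IsFinitelyButler H₁) (hH₂ : IsFinitelyButler H₂)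
    (hdiv : ∀ g : G, ∀ n : ℕ, 1 ≤ n → ∃ x : G, n • x = g)
    (g₁ : G →+ H₁) (g₂ : G →+ H₂)
    (hg₁ : Function.Injective g₁) (hg₂ : Function.Injective g₂)
    (hp₁ : g₁.range.IsPure) (hp₂ : g₂.range.IsPure) :
    ∃ (H : Type u) (_ : AddCommGroup H), IsFinitelyButler H ∧
      ∃ (f₁ : H₁ →+ H) (f₂ : H₂ →+ H),
        Function.Injective f₁ ∧ f₁.range.IsPure ∧
        Function.Injective f₂ ∧ f₂.range.IsPure ∧
        f₁.comp g₁ = f₂.comp g₂ :=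
  divisible_isAmalgamationBase_finitelyButler_general hG hH₁ hH₂ hdiv g₁ g₂ hg₁ hg₂ hp₁
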